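/- arXiv:2504.16259 — 2 statements merged into one kernel-verified Lean document; each statement's English description precedes it below -/
import Mathlib

section
/- Let p and q be probability mass functions on a finite set, arising as p_i = Tr(M_i ρ) and q_i = Tr(M_i σ) for a POVM (M_i) (positive semidefinite matrices summing to the identity) and density matrices ρ, σ ∈ Mat_n(ℂ). Then the classical Kullback–Leibler divergence satisfies D(q‖p) ≤ D(σ‖ρ), where D(σ‖ρ) = Tr(σ(log σ − log ρ)) is the quantum (Umegaki) relative entropy, assuming ρ and σ are positive definite. -/
open scoped ComplexOrder Matrix

/-- Matrix logarithm of a Hermitian matrix via the spectral theorem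
(junk value `0` on non-Hermitian matrices). -/
noncomputable def matLog {I : Type*} [Fintype I] [DecidableEq I]
    (A : Matrix I I ℂ) : Matrix I I ℂ :=
  if hA : A.IsHermitian then
    (hA.eigenvectorUnitary : Matrix I I ℂ) *
      Matrix.diagonal (fun i => (Real.log (hA.eigenvalues i) : ℂ)) *
      star (hA.eigenvectorUnitary : Matrix I I ℂ)
  else 0

/-- The Umegaki quantum relative entropy `D(σ‖ρ) = Tr(σ(log σ − log ρ))`. -/
noncomputable def qRelEnt {I : Type*} [Fintype I] [DecidableEq I]
    (σ ρ : Matrix I I ℂ) : ℝ :=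
  ((σ * (matLog σ - matLog ρ)).trace).re

/-!
For positive vectors `x, y` of equal mass,
`∑ xᵢ log (xᵢ / yᵢ) = ∫₀^∞ t / (1 + t)² · ∑ (xᵢ - yᵢ)² / (xᵢ + t yᵢ) dt`, and `D(σ‖ρ)` is the
classical divergence of the Nussbaum–Szkoła pair `(P, Q)` built from eigendecompositions of `σ`
and `ρ`. So it suffices to compare, for each `t > 0`, the χ²-type sums of `(q, p)` and of `(P, Q)`.
Write `(qᵢ - pᵢ)² / (qᵢ + t pᵢ) = max_c (2c(qᵢ - pᵢ) - c²(qᵢ + t pᵢ))` and put `C = ∑ cᵢ Mᵢ`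
at the maximisers. Operator Jensen, `C² ≤ ∑ cᵢ² Mᵢ`, bounds the classical sum by
`2 Tr((σ - ρ)C) - Tr((σ + tρ)C²)`; in the eigenbases of `σ` and `ρ` this is a sum of quadratics
in the entries of `C`, each at most the corresponding term of the Nussbaum–Szkoła sum.
-/

open MeasureTheory Set Filter Topology Real

section Scalar

variable {s r : ℝ}

noncomputable def klPrimitive (s r t : ℝ) : ℝ :=
  s * log (1 + t) - s * log (s + t * r) + (s - r) / (1 + t)

lemma hasDerivAt_klPrimitive (hs : 0 < s) (hr : 0 < r) {t : ℝ} (ht : 0 ≤ t) :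
    HasDerivAt (klPrimitive s r) (t / (1 + t) ^ 2 * ((s - r) ^ 2 / (s + t * r))) t := by
  have h1 : 0 < 1 + t := by linarith
  have h2 : 0 < s + t * r := by positivity
  have d1 : HasDerivAt (fun t : ℝ => 1 + t) 1 t := (hasDerivAt_id t).const_add 1
  have d2 : HasDerivAt (fun t : ℝ => s + t * r) r t := by
    simpa using ((hasDerivAt_id t).mul_const r).const_add s
  refine (((d1.log h1.ne').const_mul s).sub ((d2.log h2.ne').const_mul s)).add
    ((hasDerivAt_const t (s - r)).fun_div d1 h1.ne') |>.congr_deriv ?_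
  field_simp
  ring

lemma tendsto_klPrimitive (hs : 0 ≤ s) (hr : 0 < r) :
    Tendsto (klPrimitive s r) atTop (𝓝 (-(s * log r))) := by
  have hinv : Tendsto (fun t : ℝ => (s - r) / (1 + t)) atTop (𝓝 0) :=
    tendsto_const_nhds.div_atTop (tendsto_atTop_add_const_left _ 1 tendsto_id)
  have hratio : Tendsto (fun t : ℝ => (s + t * r) / (1 + t)) atTop (𝓝 r) := by
    have := (tendsto_const_nhds (x := r)).add hinv
    rw [add_zero] at this
    refine this.congr' ?_
    filter_upwards [eventually_gt_atTop 0] with t ht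
    field_simp
    ring
  have hlim := (((continuousAt_log hr.ne').tendsto.comp hratio).const_mul s).neg.add hinv
  rw [add_zero] at hlim
  refine hlim.congr' ?_
  filter_upwards [eventually_gt_atTop 0] with t ht
  have : 0 < s + t * r := by positivity
  simp only [klPrimitive, Function.comp_apply, log_div this.ne' (by positivity : (1 + t) ≠ 0)]
  ring

lemma mul_log_div_eq_integral (hs : 0 < s) (hr : 0 < r) :
    s * log (s / r)
      = (∫ t in Ioi 0, t / (1 + t) ^ 2 * ((s - r) ^ 2 / (s + t * r))) + (s - r) := by
  rw [integral_Ioi_of_hasDerivAt_of_nonneg' (fun t ht => hasDerivAt_klPrimitive hs hr ht)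
    (fun t ht => by have := mem_Ioi.mp ht; positivity) (tendsto_klPrimitive hs.le hr),
    log_div hs.ne' hr.ne']
  simp [klPrimitive]
  ring

lemma integrableOn_chiSq_term (h : 0 < s ∧ 0 < r ∨ s = 0 ∧ r = 0) :
    IntegrableOn (fun t => t / (1 + t) ^ 2 * ((s - r) ^ 2 / (s + t * r))) (Ioi 0) := by
  rcases h with ⟨hs, hr⟩ | ⟨rfl, rfl⟩
  · exact integrableOn_Ioi_deriv_of_nonneg' (fun t ht => hasDerivAt_klPrimitive hs hr ht)
      (fun t ht => by have := mem_Ioi.mp ht; positivity) (tendsto_klPrimitive hs.le hr)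
  · simp

-- `β² / α = max_c (2cβ - c²α)` at its maximiser; also true for `α = 0`, as `β / 0 = 0`.
lemma sq_div_eq (α β : ℝ) : β ^ 2 / α = 2 * (β / α) * β - (β / α) ^ 2 * α := by
  rcases eq_or_ne α 0 with rfl | hα
  · simp
  · field_simp
    ring

lemma mul_sq_div_eq (w α β : ℝ) : w * (β ^ 2 / α) = (w * β) ^ 2 / (w * α) := by
  rcases eq_or_ne w 0 with rfl | hw
  · simp
  · field_simp

lemma mul_mul_log_mul_div_mul (hs : 0 < s) (hr : 0 < r) (w : ℝ) :
    s * w * log (s * w / (r * w)) = s * w * log s - s * w * log r := by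
  rcases eq_or_ne w 0 with rfl | hw
  · simp
  · rw [mul_div_mul_right _ _ hw, log_div hs.ne' hr.ne']
    ring

lemma two_mul_re_mul_conj_sub_le {α : ℝ} (hα : 0 < α) (β : ℝ) (K g : ℂ) :
    2 * β * (K * star g).re - α * Complex.normSq K ≤ β ^ 2 * Complex.normSq g / α := by
  rw [le_div_iff₀ hα]
  have := Complex.normSq_nonneg (α * K - β * g)
  simp only [Complex.normSq_apply, Complex.mul_re, Complex.mul_im, Complex.sub_re, Complex.sub_im,
    Complex.ofReal_re, Complex.ofReal_im, Complex.star_def, Complex.conj_re, Complex.conj_im]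
    at this ⊢
  nlinarith

end Scalar

section ChiSq

variable {ι : Type*} [Fintype ι] {x y : ι → ℝ}

noncomputable def chiSqDiv (t : ℝ) (x y : ι → ℝ) : ℝ :=
  ∑ i, (x i - y i) ^ 2 / (x i + t * y i)

lemma integrableOn_chiSqDiv (hxy : ∀ i, 0 < x i ∧ 0 < y i ∨ x i = 0 ∧ y i = 0) :
    IntegrableOn (fun t => t / (1 + t) ^ 2 * chiSqDiv t x y) (Ioi 0) := by
  simp only [chiSqDiv, Finset.mul_sum]
  exact integrable_finsetSum _ fun i _ => integrableOn_chiSq_term (hxy i)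

lemma sum_mul_log_div_eq_integral_chiSqDiv
    (hxy : ∀ i, 0 < x i ∧ 0 < y i ∨ x i = 0 ∧ y i = 0) (hsum : ∑ i, x i = ∑ i, y i) :
    ∑ i, x i * log (x i / y i) = ∫ t in Ioi 0, t / (1 + t) ^ 2 * chiSqDiv t x y := by
  have hterm : ∀ i, x i * log (x i / y i)
      = (∫ t in Ioi 0, t / (1 + t) ^ 2 * ((x i - y i) ^ 2 / (x i + t * y i))) + (x i - y i) := by
    intro i
    rcases hxy i with ⟨hx, hy⟩ | ⟨hx, hy⟩
    · exact mul_log_div_eq_integral hx hy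
    · simp [hx, hy]
  simp only [chiSqDiv, Finset.mul_sum]
  rw [integral_finsetSum _ fun i _ => integrableOn_chiSq_term (hxy i),
    Finset.sum_congr rfl fun i _ => hterm i, Finset.sum_add_distrib, Finset.sum_sub_distrib, hsum,
    sub_self, add_zero]

end ChiSq

namespace Matrix

section Povm

variable {m I : Type*} [Fintype I] {M : I → Matrix m m ℂ}

lemma sum_re_trace_mul_eq [Fintype m] [DecidableEq m] (hMsum : ∑ i, M i = 1)
    (τ : Matrix m m ℂ) :
    ∑ i, ((M i * τ).trace).re = (τ.trace).re := by
  rw [← Complex.re_sum, ← trace_sum, ← Matrix.sum_mul, hMsum, Matrix.one_mul]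

lemma re_trace_mul_sum_smul [Fintype m] (τ : Matrix m m ℂ) (c : I → ℝ) :
    ((τ * ∑ i, c i • M i).trace).re = ∑ i, c i * ((M i * τ).trace).re := by
  simp only [Matrix.mul_sum, trace_sum, Complex.re_sum, Matrix.mul_smul, trace_smul,
    Complex.smul_re, smul_eq_mul, trace_mul_comm τ]

lemma isHermitian_sum_smul (hM : ∀ i, (M i).IsHermitian) (c : I → ℝ) :
    (∑ i, c i • M i).IsHermitian := by
  simp only [IsHermitian, conjTranspose_sum, conjTranspose_smul, star_trivial, (hM _).eq]

lemma posSemidef_sum_sq_smul_sub_mul_self [Fintype m] [DecidableEq m]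
    (hM : ∀ i, (M i).PosSemidef) (hMsum : ∑ i, M i = 1) (c : I → ℝ) :
    (∑ i, c i ^ 2 • M i - (∑ i, c i • M i) * ∑ i, c i • M i).PosSemidef := by
  set C := ∑ i, c i • M i
  have hC : Cᴴ = C := (isHermitian_sum_smul (fun i => (hM i).1) c).eq
  have hsum : ∑ i, (c i • 1 - C)ᴴ * M i * (c i • 1 - C) = ∑ i, c i ^ 2 • M i - C * C := by
    have hCM : ∑ i, c i • (C * M i) = C * C := by
      simp only [← Matrix.mul_smul, ← Matrix.mul_sum, C]
    have hMC : ∑ i, c i • (M i * C) = C * C := by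
      simp only [← Matrix.smul_mul, ← Matrix.sum_mul, C]
    simp only [conjTranspose_sub, conjTranspose_smul, conjTranspose_one, star_trivial, hC,
      Matrix.sub_mul, Matrix.mul_sub, Matrix.smul_mul, Matrix.mul_smul, Matrix.one_mul,
      Matrix.mul_one, smul_sub, smul_smul, Finset.sum_sub_distrib, hCM, hMC, ← Matrix.sum_mul,
      ← Matrix.mul_sum, hMsum, ← sq]
    abel
  rw [← hsum]
  exact posSemidef_sum _ fun i _ => (hM i).conjTranspose_mul_mul_same _

end Povm

variable {m : Type*} [Fintype m] [DecidableEq m]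

lemma trace_mul_diagonal_mul_star_mul {R : Type*} [CommSemiring R] [Star R]
    (U X : Matrix m m R) (d : m → R) :
    (U * diagonal d * star U * X).trace = ∑ a, d a * (star U * X * U) a a := by
  rw [show U * diagonal d * star U * X = U * (diagonal d * (star U * X)) by
    simp only [Matrix.mul_assoc], trace_mul_comm, Matrix.mul_assoc, trace]
  simp only [diag_apply, diagonal_mul, Matrix.mul_assoc]

lemma mul_diagonal_mul_star_apply_self (W : Matrix m m ℂ) (d : m → ℂ) (a : m) :
    (W * diagonal d * star W) a a = ∑ b, (Complex.normSq (W a b) : ℂ) * d b := by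
  simp only [mul_apply (M := W * diagonal d), mul_diagonal, star_apply, Complex.star_def]
  refine Finset.sum_congr rfl fun b _ => ?_
  rw [Complex.normSq_eq_conj_mul_self]
  ring

lemma sum_normSq_row_eq_one {W : Matrix m m ℂ} (hW : W ∈ unitaryGroup m ℂ) (a : m) :
    ∑ b, Complex.normSq (W a b) = 1 := by
  have h := mul_diagonal_mul_star_apply_self W (fun _ => 1) a
  rw [diagonal_one, Matrix.mul_one, mem_unitaryGroup_iff.mp hW] at h
  exact_mod_cast (by simpa using h.symm : (∑ b, (Complex.normSq (W a b) : ℂ)) = 1)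

lemma sum_normSq_col_eq_one {W : Matrix m m ℂ} (hW : W ∈ unitaryGroup m ℂ) (b : m) :
    ∑ a, Complex.normSq (W a b) = 1 := by
  simpa [star_apply] using sum_normSq_row_eq_one (Unitary.star_mem hW) b

namespace IsHermitian

variable {A B : Matrix m m ℂ}

lemma trace_mul_eq_sum (hA : A.IsHermitian) (X : Matrix m m ℂ) :
    (A * X).trace = ∑ a, (hA.eigenvalues a : ℂ) *
      (star (hA.eigenvectorUnitary : Matrix m m ℂ) * X * hA.eigenvectorUnitary) a a := by
  conv_lhs => rw [hA.spectral_theorem]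
  exact trace_mul_diagonal_mul_star_mul _ _ _

lemma matLog_eq (hA : A.IsHermitian) :
    matLog A = (hA.eigenvectorUnitary : Matrix m m ℂ) *
      diagonal (fun a => (log (hA.eigenvalues a) : ℂ)) *
      star (hA.eigenvectorUnitary : Matrix m m ℂ) :=
  dif_pos hA

noncomputable def inEigenbases (hA : A.IsHermitian) (hB : B.IsHermitian) (X : Matrix m m ℂ) :
    Matrix m m ℂ :=
  star (hA.eigenvectorUnitary : Matrix m m ℂ) * X * hB.eigenvectorUnitary

lemma inEigenbases_one_mem_unitaryGroup (hA : A.IsHermitian) (hB : B.IsHermitian) :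
    hA.inEigenbases hB 1 ∈ unitaryGroup m ℂ := by
  rw [inEigenbases, Matrix.mul_one]
  exact Submonoid.mul_mem _ (Unitary.star_mem hA.eigenvectorUnitary.2) hB.eigenvectorUnitary.2

lemma inEigenbases_apply_of_isHermitian (hA : A.IsHermitian) (hB : B.IsHermitian)
    {X : Matrix m m ℂ} (hX : X.IsHermitian) (a b : m) :
    hB.inEigenbases hA X b a = star (hA.inEigenbases hB X a b) := by
  rw [← conjTranspose_apply, inEigenbases, inEigenbases, conjTranspose_mul, conjTranspose_mul,
    hX.eq]
  simp only [star_eq_conjTranspose, conjTranspose_conjTranspose, Matrix.mul_assoc]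

lemma trace_mul_mul_eq_sum (hA : A.IsHermitian) (hB : B.IsHermitian) (X Y : Matrix m m ℂ) :
    (A * (X * Y)).trace = ∑ a, ∑ b, (hA.eigenvalues a : ℂ) *
      (hA.inEigenbases hB X a b * hB.inEigenbases hA Y b a) := by
  rw [hA.trace_mul_eq_sum]
  have hsplit : star (hA.eigenvectorUnitary : Matrix m m ℂ) * (X * Y) * hA.eigenvectorUnitary
      = hA.inEigenbases hB X * hB.inEigenbases hA Y := by
    simp only [inEigenbases, Matrix.mul_assoc]
    rw [← Matrix.mul_assoc (hB.eigenvectorUnitary : Matrix m m ℂ),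
      Unitary.mul_star_self_of_mem hB.eigenvectorUnitary.2, Matrix.one_mul]
  simp only [hsplit, mul_apply (M := hA.inEigenbases hB X), Finset.mul_sum]

end IsHermitian

lemma PosSemidef.trace_mul_nonneg {A B : Matrix m m ℂ} (hA : A.PosSemidef) (hB : B.PosSemidef) :
    0 ≤ (A * B).trace := by
  rw [hA.1.trace_mul_eq_sum]
  refine Finset.sum_nonneg fun a _ => mul_nonneg ?_ ?_
  · exact_mod_cast hA.eigenvalues_nonneg a
  · exact (hB.conjTranspose_mul_mul_same _).diag_nonneg

lemma PosDef.re_trace_mul_pos {A B : Matrix m m ℂ} (hA : A.PosDef) (hB : B.PosSemidef)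
    (hB0 : B ≠ 0) : 0 < ((B * A).trace).re := by
  set U : Matrix m m ℂ := ↑hA.1.eigenvectorUnitary
  have hB' : (star U * B * U).PosSemidef := hB.conjTranspose_mul_mul_same U
  obtain ⟨a, ha⟩ : ∃ a, (star U * B * U) a a ≠ 0 := by
    by_contra! h
    refine hB0 (hB.trace_eq_zero_iff.mp ?_)
    rw [← Matrix.one_mul B, ← Unitary.coe_mul_star_self hA.1.eigenvectorUnitary,
      ← trace_mul_cycle]
    exact Finset.sum_eq_zero fun a _ => h a
  have hpos : 0 < (A * B).trace := by
    rw [hA.1.trace_mul_eq_sum]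
    refine Finset.sum_pos' (fun b _ => mul_nonneg ?_ hB'.diag_nonneg) ⟨a, Finset.mem_univ a, ?_⟩
    · exact_mod_cast (hA.eigenvalues_pos b).le
    · exact mul_pos (by exact_mod_cast hA.eigenvalues_pos a) (hB'.diag_nonneg.lt_of_ne' ha)
  rw [trace_mul_comm]
  exact (Complex.pos_iff.mp hpos).1

lemma re_trace_mul_sq_le {I : Type*} [Fintype I] {M : I → Matrix m m ℂ}
    (hM : ∀ i, (M i).PosSemidef) (hMsum : ∑ i, M i = 1) (c : I → ℝ) {τ : Matrix m m ℂ}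
    (hτ : τ.PosSemidef) :
    ((τ * ((∑ i, c i • M i) * ∑ i, c i • M i)).trace).re
      ≤ ∑ i, c i ^ 2 * ((M i * τ).trace).re := by
  have h := Complex.nonneg_iff.mp
    (hτ.trace_mul_nonneg (posSemidef_sum_sq_smul_sub_mul_self hM hMsum c))
  rw [Matrix.mul_sub, trace_sub, Complex.sub_re, re_trace_mul_sum_smul] at h
  linarith [h.1]

end Matrix

namespace Matrix.IsHermitian

variable {m : Type*} [Fintype m] [DecidableEq m] {A B : Matrix m m ℂ}

noncomputable def eigenOverlap (hA : A.IsHermitian) (hB : B.IsHermitian) (a b : m) : ℝ :=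
  Complex.normSq (hA.inEigenbases hB 1 a b)

/-- The Nussbaum–Szkoła distributions `P (a, b) = λₐ |⟨uₐ, v_b⟩|²` and
`Q (a, b) = μ_b |⟨uₐ, v_b⟩|²`, for eigenpairs `(λₐ, uₐ)` of `A` and `(μ_b, v_b)` of `B`. -/
noncomputable def nussbaumSzkolaFst (hA : A.IsHermitian) (hB : B.IsHermitian) (x : m × m) : ℝ :=
  hA.eigenvalues x.1 * hA.eigenOverlap hB x.1 x.2

noncomputable def nussbaumSzkolaSnd (hA : A.IsHermitian) (hB : B.IsHermitian) (x : m × m) : ℝ :=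
  hB.eigenvalues x.2 * hA.eigenOverlap hB x.1 x.2

lemma sum_nussbaumSzkolaFst (hA : A.IsHermitian) (hB : B.IsHermitian) :
    ∑ x, hA.nussbaumSzkolaFst hB x = A.trace.re := by
  simp only [nussbaumSzkolaFst, eigenOverlap, Fintype.sum_prod_type, ← Finset.mul_sum,
    sum_normSq_row_eq_one (hA.inEigenbases_one_mem_unitaryGroup hB), mul_one,
    hA.trace_eq_sum_eigenvalues, Complex.re_sum]
  rfl

lemma sum_nussbaumSzkolaSnd (hA : A.IsHermitian) (hB : B.IsHermitian) :
    ∑ x, hA.nussbaumSzkolaSnd hB x = B.trace.re := by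
  simp only [nussbaumSzkolaSnd, eigenOverlap, Fintype.sum_prod_type_right, ← Finset.mul_sum,
    sum_normSq_col_eq_one (hA.inEigenbases_one_mem_unitaryGroup hB), mul_one,
    hB.trace_eq_sum_eigenvalues, Complex.re_sum]
  rfl

lemma re_trace_mul_matLog_self (hA : A.IsHermitian) :
    ((A * matLog A).trace).re = ∑ a, hA.eigenvalues a * log (hA.eigenvalues a) := by
  rw [hA.trace_mul_eq_sum, hA.matLog_eq, Complex.re_sum]
  have hU : star (hA.eigenvectorUnitary : Matrix m m ℂ) * hA.eigenvectorUnitary = 1 :=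
    Unitary.coe_star_mul_self _
  simp only [← Matrix.mul_assoc, hU, Matrix.one_mul]
  simp only [Matrix.mul_assoc, hU, Matrix.mul_one, diagonal_apply_eq]
  norm_cast

lemma re_trace_mul_matLog (hA : A.IsHermitian) (hB : B.IsHermitian) :
    ((A * matLog B).trace).re
      = ∑ a, ∑ b, hA.eigenvalues a * hA.eigenOverlap hB a b * log (hB.eigenvalues b) := by
  have hconj : ∀ D : Matrix m m ℂ,
      star (hA.eigenvectorUnitary : Matrix m m ℂ) * (hB.eigenvectorUnitary * D *
        star (hB.eigenvectorUnitary : Matrix m m ℂ)) * hA.eigenvectorUnitary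
      = hA.inEigenbases hB 1 * D * star (hA.inEigenbases hB 1) := by
    intro D
    simp only [inEigenbases, Matrix.mul_one, star_mul, star_star, Matrix.mul_assoc]
  rw [hA.trace_mul_eq_sum, hB.matLog_eq, Complex.re_sum]
  refine Finset.sum_congr rfl fun a _ => ?_
  rw [hconj, mul_diagonal_mul_star_apply_self, Finset.mul_sum, Complex.re_sum]
  refine Finset.sum_congr rfl fun b _ => ?_
  rw [eigenOverlap, ← Complex.ofReal_mul, ← Complex.ofReal_mul, Complex.ofReal_re]
  ring

lemma re_trace_quadratic_eq_sum (hA : A.IsHermitian) (hB : B.IsHermitian) {C : Matrix m m ℂ}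
    (hC : C.IsHermitian) (t : ℝ) :
    2 * ((A * C).trace).re - 2 * ((B * C).trace).re - ((A * (C * C)).trace).re
        - t * ((B * (C * C)).trace).re
      = ∑ a, ∑ b, (2 * (hA.eigenvalues a - hB.eigenvalues b) *
            (hA.inEigenbases hB C a b * star (hA.inEigenbases hB 1 a b)).re
          - (hA.eigenvalues a + t * hB.eigenvalues b) *
            Complex.normSq (hA.inEigenbases hB C a b)) := by
  have hCB := hA.inEigenbases_apply_of_isHermitian hB hC
  have h1B := hA.inEigenbases_apply_of_isHermitian hB isHermitian_one
  have hAC : ((A * C).trace).re = ∑ a, ∑ b, hA.eigenvalues a *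
      (hA.inEigenbases hB C a b * star (hA.inEigenbases hB 1 a b)).re := by
    rw [← Matrix.mul_one (A * C), Matrix.mul_assoc, hA.trace_mul_mul_eq_sum hB]
    simp only [h1B, Complex.re_sum, Complex.re_ofReal_mul]
  have hBC : ((B * C).trace).re = ∑ a, ∑ b, hB.eigenvalues b *
      (hA.inEigenbases hB C a b * star (hA.inEigenbases hB 1 a b)).re := by
    rw [← Matrix.mul_one (B * C), Matrix.mul_assoc, hB.trace_mul_mul_eq_sum hA, Finset.sum_comm]
    have hre : ∀ z w : ℂ, (star z * w).re = (z * star w).re := fun z w => by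
      rw [Complex.star_def, ← Complex.conj_re, map_mul, Complex.conj_conj, mul_comm]
    simp only [hCB, hre, Complex.re_sum, Complex.re_ofReal_mul]
  have hACC : ((A * (C * C)).trace).re = ∑ a, ∑ b, hA.eigenvalues a *
      Complex.normSq (hA.inEigenbases hB C a b) := by
    rw [hA.trace_mul_mul_eq_sum hB]
    simp only [hCB, Complex.re_sum, Complex.re_ofReal_mul, Complex.star_def, Complex.mul_conj,
      Complex.ofReal_re]
  have hBCC : ((B * (C * C)).trace).re = ∑ a, ∑ b, hB.eigenvalues b *
      Complex.normSq (hA.inEigenbases hB C a b) := by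
    rw [hB.trace_mul_mul_eq_sum hA, Finset.sum_comm]
    simp only [hCB, Complex.re_sum, Complex.re_ofReal_mul, Complex.star_def,
      mul_comm (starRingEnd ℂ _), Complex.mul_conj, Complex.ofReal_re]
  rw [hAC, hBC, hACC, hBCC]
  simp only [Finset.mul_sum, ← Finset.sum_sub_distrib]
  refine Finset.sum_congr rfl fun a _ => Finset.sum_congr rfl fun b _ => ?_
  ring

end Matrix.IsHermitian

namespace Matrix.PosDef

open IsHermitian

variable {m : Type*} [Fintype m] [DecidableEq m] {A B : Matrix m m ℂ}

lemma nussbaumSzkola_pos_or_eq_zero (hA : A.PosDef) (hB : B.PosDef) (x : m × m) :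
    0 < hA.1.nussbaumSzkolaFst hB.1 x ∧ 0 < hA.1.nussbaumSzkolaSnd hB.1 x ∨
      hA.1.nussbaumSzkolaFst hB.1 x = 0 ∧ hA.1.nussbaumSzkolaSnd hB.1 x = 0 := by
  rcases (Complex.normSq_nonneg (hA.1.inEigenbases hB.1 1 x.1 x.2)).eq_or_lt' with h | h
  · right
    simp only [nussbaumSzkolaFst, nussbaumSzkolaSnd, eigenOverlap, h, mul_zero, and_self]
  · exact .inl ⟨mul_pos (hA.eigenvalues_pos _) h, mul_pos (hB.eigenvalues_pos _) h⟩

lemma qRelEnt_eq_sum_nussbaumSzkola (hA : A.PosDef) (hB : B.PosDef) :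
    qRelEnt A B = ∑ x, hA.1.nussbaumSzkolaFst hB.1 x *
      log (hA.1.nussbaumSzkolaFst hB.1 x / hA.1.nussbaumSzkolaSnd hB.1 x) := by
  have hterm := fun a b => mul_mul_log_mul_div_mul (hA.eigenvalues_pos a)
    (hB.eigenvalues_pos b) (hA.1.eigenOverlap hB.1 a b)
  rw [qRelEnt, Matrix.mul_sub, trace_sub, Complex.sub_re, hA.1.re_trace_mul_matLog_self,
    hA.1.re_trace_mul_matLog hB.1, Fintype.sum_prod_type]
  simp only [nussbaumSzkolaFst, nussbaumSzkolaSnd, hterm, Finset.sum_sub_distrib]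
  congr 1
  refine Finset.sum_congr rfl fun a _ => ?_
  rw [← Finset.sum_mul, ← Finset.mul_sum]
  simp only [eigenOverlap, sum_normSq_row_eq_one (hA.1.inEigenbases_one_mem_unitaryGroup hB.1),
    mul_one]

theorem chiSqDiv_le_nussbaumSzkola (hA : A.PosDef) (hB : B.PosSemidef) {I : Type*} [Fintype I]
    {M : I → Matrix m m ℂ} (hM : ∀ i, (M i).PosSemidef) (hMsum : ∑ i, M i = 1)
    {t : ℝ} (ht : 0 ≤ t) :
    chiSqDiv t (fun i => ((M i * A).trace).re) (fun i => ((M i * B).trace).re)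
      ≤ chiSqDiv t (hA.1.nussbaumSzkolaFst hB.1) (hA.1.nussbaumSzkolaSnd hB.1) := by
  set q : I → ℝ := fun i => ((M i * A).trace).re
  set p : I → ℝ := fun i => ((M i * B).trace).re
  set c : I → ℝ := fun i => (q i - p i) / (q i + t * p i)
  set C := ∑ i, c i • M i
  have hC : C.IsHermitian := isHermitian_sum_smul (fun i => (hM i).1) c
  have hclassical : chiSqDiv t q p ≤ 2 * ((A * C).trace).re - 2 * ((B * C).trace).re
      - ((A * (C * C)).trace).re - t * ((B * (C * C)).trace).re := by
    calc chiSqDiv t q p = 2 * ∑ i, c i * q i - 2 * ∑ i, c i * p i - ∑ i, c i ^ 2 * q i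
          - t * ∑ i, c i ^ 2 * p i := by
          simp only [chiSqDiv, sq_div_eq _ (q _ - p _), Finset.mul_sum, ← Finset.sum_sub_distrib]
          exact Finset.sum_congr rfl fun i _ => by ring
      _ ≤ _ := by
          rw [re_trace_mul_sum_smul A c, re_trace_mul_sum_smul B c]
          linarith [re_trace_mul_sq_le hM hMsum c hA.posSemidef,
            mul_le_mul_of_nonneg_left (re_trace_mul_sq_le hM hMsum c hB) ht]
  refine hclassical.trans ?_
  rw [hA.1.re_trace_quadratic_eq_sum hB.1 hC t, chiSqDiv, Fintype.sum_prod_type]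
  refine Finset.sum_le_sum fun a _ => Finset.sum_le_sum fun b _ => ?_
  have hα : 0 < hA.1.eigenvalues a + t * hB.1.eigenvalues b :=
    add_pos_of_pos_of_nonneg (hA.eigenvalues_pos a) (mul_nonneg ht (hB.eigenvalues_nonneg b))
  refine (two_mul_re_mul_conj_sub_le hα _ _ _).trans_eq ?_
  simp only [nussbaumSzkolaFst, nussbaumSzkolaSnd, eigenOverlap]
  rw [mul_div_right_comm, mul_comm, mul_sq_div_eq]
  ring_nf

end Matrix.PosDef

theorem stmt_6 {n : ℕ} {I : Type*} [Fintype I]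
    (ρ σ : Matrix (Fin n) (Fin n) ℂ)
    (hρ : ρ.PosDef) (hσ : σ.PosDef) (hρ1 : ρ.trace = 1) (hσ1 : σ.trace = 1)
    (M : I → Matrix (Fin n) (Fin n) ℂ)
    (hM : ∀ i, (M i).PosSemidef) (hMsum : ∑ i, M i = 1) :
    ∑ i, ((M i * σ).trace).re *
        Real.log (((M i * σ).trace).re / ((M i * ρ).trace).re)
      ≤ qRelEnt σ ρ := by
  have hqp : ∀ i, 0 < ((M i * σ).trace).re ∧ 0 < ((M i * ρ).trace).re ∨
      ((M i * σ).trace).re = 0 ∧ ((M i * ρ).trace).re = 0 := by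
    intro i
    by_cases hMi : M i = 0
    · simp [hMi]
    · exact .inl ⟨hσ.re_trace_mul_pos (hM i) hMi, hρ.re_trace_mul_pos (hM i) hMi⟩
  have hPQ := hσ.nussbaumSzkola_pos_or_eq_zero hρ
  rw [sum_mul_log_div_eq_integral_chiSqDiv hqp
      (by rw [Matrix.sum_re_trace_mul_eq hMsum, Matrix.sum_re_trace_mul_eq hMsum, hσ1, hρ1]),
    hσ.qRelEnt_eq_sum_nussbaumSzkola hρ, sum_mul_log_div_eq_integral_chiSqDiv hPQ
      (by rw [hσ.1.sum_nussbaumSzkolaFst, hσ.1.sum_nussbaumSzkolaSnd, hσ1, hρ1])]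
  refine setIntegral_mono_on (integrableOn_chiSqDiv hqp) (integrableOn_chiSqDiv hPQ)
    measurableSet_Ioi fun t ht => ?_
  exact mul_le_mul_of_nonneg_left (hσ.chiSqDiv_le_nussbaumSzkola hρ.posSemidef hM hMsum ht.out.le)
    (by have := ht.out; positivity)
end

section
/- Let X_1, X_2, … be i.i.d. real-valued random variables with finite positive mean μ = E[X_1] > 0, let S_n = X_1 + ⋯ + X_n, and for h > 0 define the first passage time T_h = inf{n ≥ 1 : S_n ≥ h}. Then T_h is almost surely finite and E[T_h]/h → 1/μ as h → ∞. -/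
/-!
Write `τ_h` for the first passage time and `A_k = {τ_h > k}`; this event is determined by
`X 0, …, X (k-1)`, hence independent of `X k`, and `E[τ_h] = ∑ P(A_k)`. Summing
`E[1_{A_k} X_k] = P(A_k) E[X_k]` is Wald's identity `E[S_τ] = m E[τ]`.

Upper bound: truncating the increments at a level `c ≥ 0` only delays the passage, and the
truncated walk overshoots `h ≥ 0` by at most `c`. Wald's identity for the truncated walk stopped at
`min τ N` gives `E[τ_h] ≤ (h + c) / E[min (X 0) c]`, and `E[min (X 0) c] → m` as `c → ∞`. In
particular `E[τ_h] < ∞`, so `τ_h < ∞` almost surely.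

Lower bound: since `S_τ ≥ h`, Wald's identity gives `h ≤ m E[τ_h]`.
-/

open MeasureTheory ProbabilityTheory Filter Finset
open scoped ENNReal Topology

namespace RandomWalk

/-- When the walk with partial sums `∑ i ∈ range j, x i` reaches `h` at all, this is
`k < firstPassage x h`. -/
def StaysBelow (x : ℕ → ℝ) (h : ℝ) (k : ℕ) : Prop :=
  ∀ j, 1 ≤ j → j ≤ k → ∑ i ∈ range j, x i < h

/-- `sInf ∅ = 0`: this is `0` when the walk never reaches `h`. -/
noncomputable def firstPassage (x : ℕ → ℝ) (h : ℝ) : ℕ :=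
  sInf {n | 1 ≤ n ∧ h ≤ ∑ i ∈ range n, x i}

section Deterministic

variable {x y : ℕ → ℝ} {h h' c : ℝ} {j k : ℕ}

lemma StaysBelow.anti (hk : StaysBelow x h k) (hjk : j ≤ k) : StaysBelow x h j :=
  fun i hi hij => hk i hi (hij.trans hjk)

lemma StaysBelow.mono (hk : StaysBelow y h k) (hxy : ∀ i, x i ≤ y i) (hh : h ≤ h') :
    StaysBelow x h' k :=
  fun j hj hjk => (sum_le_sum fun i _ => hxy i).trans_lt ((hk j hj hjk).trans_le hh)

lemma staysBelow_congr (hxy : ∀ i < k, x i = y i) : StaysBelow x h k ↔ StaysBelow y h k := by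
  refine forall_congr' fun j => imp_congr_right fun _ => imp_congr_right fun hjk => ?_
  rw [sum_congr rfl fun i hi => hxy i ((mem_range.1 hi).trans_le hjk)]

lemma StaysBelow.sum_range_le (hk : StaysBelow x h k) (hh : 0 ≤ h) : ∑ i ∈ range k, x i ≤ h := by
  rcases Nat.eq_zero_or_pos k with rfl | hpos
  · simpa using hh
  · exact (hk k hpos le_rfl).le

lemma exists_le_sum_of_not_staysBelow (hk : ¬ StaysBelow x h k) :
    ∃ n, 1 ≤ n ∧ h ≤ ∑ i ∈ range n, x i := by
  simp only [StaysBelow, not_forall, not_lt] at hk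
  obtain ⟨n, hn, -, hle⟩ := hk
  exact ⟨n, hn, hle⟩

lemma staysBelow_iff_lt_firstPassage (hx : ∃ n, 1 ≤ n ∧ h ≤ ∑ i ∈ range n, x i) :
    StaysBelow x h k ↔ k < firstPassage x h := by
  constructor
  · intro hk
    by_contra! hle
    obtain ⟨hpos, hcross⟩ := Nat.sInf_mem hx
    exact (hk _ hpos hle).not_ge hcross
  · intro hlt j hj hjk
    by_contra! hge
    exact (Nat.sInf_le ⟨hj, hge⟩ : firstPassage x h ≤ j).not_gt (hjk.trans_lt hlt)

lemma le_sum_range_firstPassage (hx : ∃ n, 1 ≤ n ∧ h ≤ ∑ i ∈ range n, x i) :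
    h ≤ ∑ i ∈ range (firstPassage x h), x i :=
  (Nat.sInf_mem hx).2

open scoped Classical in
lemma hasSum_ite_staysBelow {M : Type*} [AddCommMonoid M] [TopologicalSpace M]
    (hx : ∃ n, 1 ≤ n ∧ h ≤ ∑ i ∈ range n, x i) (f : ℕ → M) :
    HasSum (fun k => if StaysBelow x h k then f k else 0)
      (∑ k ∈ range (firstPassage x h), f k) := by
  have hsum : ∑ k ∈ range (firstPassage x h), f k
      = ∑ k ∈ range (firstPassage x h), if StaysBelow x h k then f k else 0 :=
    sum_congr rfl fun k hk => (if_pos ((staysBelow_iff_lt_firstPassage hx).2 (mem_range.1 hk))).symm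
  rw [hsum]
  exact hasSum_sum_of_ne_finset_zero fun k hk =>
    if_neg (mt (staysBelow_iff_lt_firstPassage hx).1 (by simpa using hk))

open scoped Classical in
/-- The sum is the walk stopped at `min τ N`; before `τ` the walk is below `h ≥ 0`, so the
stopped walk exceeds `h` by at most one increment. -/
lemma sum_range_ite_staysBelow_le (hc : ∀ k, x k ≤ c) (hh : 0 ≤ h) (hc₀ : 0 ≤ c) (N : ℕ) :
    ∑ k ∈ range N, (if StaysBelow x h k then x k else 0) ≤ h + c := by
  induction N with
  | zero => simp only [range_zero, sum_empty]; linarith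
  | succ N ih =>
    rw [sum_range_succ]
    by_cases hN : StaysBelow x h N
    · have hstop : ∑ k ∈ range N, (if StaysBelow x h k then x k else 0) = ∑ k ∈ range N, x k :=
        sum_congr rfl fun k hk => if_pos (hN.anti (mem_range.1 hk).le)
      rw [if_pos hN, hstop]
      linarith [hN.sum_range_le hh, hc N]
    · rw [if_neg hN, add_zero]
      exact ih

end Deterministic

lemma measurableSet_staysBelow {α : Type*} [MeasurableSpace α] {x : α → ℕ → ℝ}
    (hx : ∀ i, Measurable fun a => x a i) (h : ℝ) (k : ℕ) :
    MeasurableSet {a | StaysBelow (x a) h k} := by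
  simp only [StaysBelow, Set.ofPred_forall]
  exact .iInter fun j => .iInter fun _ => .iInter fun _ =>
    measurableSet_lt (Finset.measurable_sum _ fun i _ => hx i) measurable_const

lemma tendsto_add_div_div_self_atTop (c a : ℝ) :
    Tendsto (fun h : ℝ => (h + c) / a / h) atTop (𝓝 a⁻¹) := by
  have hlim := (tendsto_const_nhds (x := 1)).add
    ((tendsto_const_nhds (x := c)).mul tendsto_inv_atTop_zero) |>.mul
    (tendsto_const_nhds (x := a⁻¹))
  rw [mul_zero, add_zero, one_mul] at hlim
  exact hlim.congr' ((eventually_ne_atTop 0).mono fun h hh => by field_simp)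

variable {Ω : Type*} [MeasurableSpace Ω] {μ : Measure Ω}

lemma indepFun_indicator_staysBelow {X : ℕ → Ω → ℝ} (hX : ∀ i, Measurable (X i))
    (hind : iIndepFun X μ) (h : ℝ) (k : ℕ) :
    IndepFun ({ω | StaysBelow (X · ω) h k}.indicator (1 : Ω → ℝ)) (X k) μ := by
  -- The event only involves `X 0, …, X (k - 1)`; `past` extends such a tuple by zeros.
  have hpair := hind.indepFun_finset (range k) {k} (by simp) hX
  let past : (range k → ℝ) → ℕ → ℝ := fun v i => if hi : i ∈ range k then v ⟨i, hi⟩ else 0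
  have hpast : ∀ i, Measurable fun v => past v i := fun i => by
    by_cases hi : i ∈ range k
    · simpa only [past, hi, ↓reduceDIte] using measurable_pi_apply _
    · simp only [past, hi, ↓reduceDIte, measurable_const]
  have hcomp := hpair.comp
    ((measurable_const.indicator (measurableSet_staysBelow hpast h k)) :
      Measurable ({v | StaysBelow (past v) h k}.indicator (1 : (range k → ℝ) → ℝ)))
    (measurable_pi_apply ⟨k, mem_singleton_self k⟩)
  convert hcomp using 1
  · ext ω
    have hsame : StaysBelow (X · ω) h k ↔ StaysBelow (past fun i => X i ω) h k :=
      staysBelow_congr fun i hi => by simp [past, hi]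
    by_cases hω : StaysBelow (X · ω) h k
    · rw [Function.comp_apply, Set.indicator_of_mem hω, Set.indicator_of_mem (hsame.1 hω)]
      rfl
    · rw [Function.comp_apply, Set.indicator_of_notMem hω, Set.indicator_of_notMem (mt hsame.2 hω)]
  · rfl

lemma integral_indicator_eq_measureReal_mul {A : Set Ω} {Y : Ω → ℝ} (hA : MeasurableSet A)
    (hY : AEStronglyMeasurable Y μ) (hind : IndepFun (A.indicator (1 : Ω → ℝ)) Y μ) :
    ∫ ω, A.indicator Y ω ∂μ = μ.real A * ∫ ω, Y ω ∂μ := by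
  have hprod : A.indicator Y = A.indicator 1 * Y := by
    ext ω; by_cases hω : ω ∈ A <;> simp [hω]
  rw [hprod, hind.integral_mul_eq_mul_integral (aestronglyMeasurable_one.indicator hA) hY,
    integral_indicator_one hA]

lemma lintegral_enorm_indicator_eq_measure_mul {A : Set Ω} {Y : Ω → ℝ} (hA : MeasurableSet A)
    (hY : Measurable Y) (hind : IndepFun (A.indicator (1 : Ω → ℝ)) Y μ) :
    ∫⁻ ω, ‖A.indicator Y ω‖ₑ ∂μ = μ A * ∫⁻ ω, ‖Y ω‖ₑ ∂μ := by
  have hprod : (fun ω => ‖A.indicator Y ω‖ₑ)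
      = (fun ω => ‖A.indicator (1 : Ω → ℝ) ω‖ₑ) * fun ω => ‖Y ω‖ₑ := by
    ext ω; by_cases hω : ω ∈ A <;> simp [hω]
  have hind' : IndepFun (fun ω => ‖A.indicator (1 : Ω → ℝ) ω‖ₑ) (fun ω => ‖Y ω‖ₑ) μ :=
    hind.comp measurable_enorm measurable_enorm
  rw [hprod, lintegral_mul_eq_lintegral_mul_lintegral_of_indepFun
    (by exact (measurable_const.indicator hA).enorm) hY.enorm hind']
  simp [enorm_indicator_eq_indicator_enorm, hA]

lemma integral_sum_indicator_eq {A : ℕ → Set Ω} {Y : ℕ → Ω → ℝ} {a : ℝ}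
    (hA : ∀ k, MeasurableSet (A k)) (hY : ∀ k, Integrable (Y k) μ)
    (hind : ∀ k, IndepFun ((A k).indicator (1 : Ω → ℝ)) (Y k) μ)
    (hmean : ∀ k, ∫ ω, Y k ω ∂μ = a) (N : ℕ) :
    ∫ ω, ∑ k ∈ range N, (A k).indicator (Y k) ω ∂μ = a * ∑ k ∈ range N, μ.real (A k) := by
  rw [integral_finsetSum _ fun k _ => (hY k).indicator (hA k), mul_sum]
  refine sum_congr rfl fun k _ => ?_
  rw [integral_indicator_eq_measureReal_mul (hA k) (hY k).1 (hind k), hmean k, mul_comm]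

lemma integrable_and_integral_eq_tsum_of_hasSum {f : ℕ → Ω → ℝ} {F : Ω → ℝ}
    (hf : ∀ k, AEStronglyMeasurable (f k) μ) (hF : ∀ᵐ ω ∂μ, HasSum (f · ω) (F ω))
    (hfin : ∑' k, ∫⁻ ω, ‖f k ω‖ₑ ∂μ ≠ ∞) :
    Integrable F μ ∧ ∫ ω, F ω ∂μ = ∑' k, ∫ ω, f k ω ∂μ := by
  have hFeq : F =ᵐ[μ] fun ω => ∑' k, f k ω := hF.mono fun ω hω => hω.tsum_eq.symm
  refine ⟨⟨aestronglyMeasurable_of_tendsto_ae atTop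
    (f := fun N ω => ∑ k ∈ range N, f k ω)
    (fun N => (range N).aestronglyMeasurable_fun_sum fun k _ => hf k)
    (hF.mono fun ω hω => hω.tendsto_sum_nat), ?_⟩,
    by rw [integral_congr_ae hFeq, integral_tsum hf hfin]⟩
  calc ∫⁻ ω, ‖F ω‖ₑ ∂μ = ∫⁻ ω, ‖∑' k, f k ω‖ₑ ∂μ :=
        lintegral_congr_ae (hFeq.mono fun ω hω => congrArg (‖·‖ₑ) hω)
    _ ≤ ∫⁻ ω, ∑' k, ‖f k ω‖ₑ ∂μ := lintegral_mono fun ω => enorm_tsum_le_tsum_enorm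
    _ = ∑' k, ∫⁻ ω, ‖f k ω‖ₑ ∂μ := lintegral_tsum fun k => (hf k).enorm
    _ < ∞ := hfin.lt_top

lemma tendsto_integral_min_atTop {f : Ω → ℝ} (hf : Integrable f μ) :
    Tendsto (fun c => ∫ ω, min (f ω) c ∂μ) atTop (𝓝 (∫ ω, f ω ∂μ)) := by
  refine tendsto_integral_filter_of_dominated_convergence (fun ω => |f ω|)
    (Eventually.of_forall fun c => hf.1.inf aestronglyMeasurable_const) ?_ hf.abs
    (Eventually.of_forall fun ω => tendsto_const_nhds.congr'
      ((eventually_ge_atTop (f ω)).mono fun c hc => (min_eq_left hc).symm))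
  filter_upwards [eventually_ge_atTop 0] with c hc
  refine Eventually.of_forall fun ω => ?_
  rcases le_total (f ω) c with hfc | hcf
  · rw [min_eq_left hfc, Real.norm_eq_abs]
  · rw [min_eq_right hcf, Real.norm_of_nonneg hc]
    exact hcf.trans (le_abs_self _)

/-- Wald's identity for the walk stopped at `min τ N` gives `a * E[min τ N] ≤ h + c`. -/
lemma tsum_measure_staysBelow_le [IsProbabilityMeasure μ] {Y : ℕ → Ω → ℝ} {a c h : ℝ}
    (hY : ∀ k, Measurable (Y k)) (hind : iIndepFun Y μ) (hint : ∀ k, Integrable (Y k) μ)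
    (hmean : ∀ k, ∫ ω, Y k ω ∂μ = a) (ha : 0 < a) (hYc : ∀ k ω, Y k ω ≤ c) (hh : 0 ≤ h)
    (hc : 0 ≤ c) :
    ∑' k, μ {ω | StaysBelow (Y · ω) h k} ≤ ENNReal.ofReal ((h + c) / a) := by
  classical
  set A : ℕ → Set Ω := fun k => {ω | StaysBelow (Y · ω) h k}
  have hA : ∀ k, MeasurableSet (A k) := measurableSet_staysBelow hY h
  rw [ENNReal.tsum_eq_iSup_nat]
  refine iSup_le fun N => ?_
  have hstopped : ∫ ω, ∑ k ∈ range N, (A k).indicator (Y k) ω ∂μ ≤ h + c := by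
    refine (integral_mono (integrable_finsetSum _ fun k _ => (hint k).indicator (hA k))
      (integrable_const (h + c)) fun ω => ?_).trans (by simp)
    simpa only [A, Set.indicator_apply, Set.mem_ofPred_eq] using
      sum_range_ite_staysBelow_le (fun k => hYc k ω) hh hc N
  rw [integral_sum_indicator_eq hA hint (indepFun_indicator_staysBelow hY hind h) hmean N]
    at hstopped
  rw [← ENNReal.ofReal_toReal (ENNReal.sum_ne_top.2 fun k _ => measure_ne_top μ (A k)),
    ENNReal.toReal_sum fun k _ => measure_ne_top μ (A k)]
  exact ENNReal.ofReal_le_ofReal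
    ((le_div_iff₀ ha).2 (by simpa [measureReal_def, mul_comm] using hstopped))

variable {X : ℕ → Ω → ℝ} {h : ℝ}

lemma ae_exists_le_sum (hfin : ∑' k, μ {ω | StaysBelow (X · ω) h k} ≠ ∞) :
    ∀ᵐ ω ∂μ, ∃ n, 1 ≤ n ∧ h ≤ ∑ i ∈ range n, X i ω := by
  filter_upwards [ae_eventually_notMem hfin] with ω hω
  obtain ⟨k, hk⟩ := hω.exists
  exact exists_le_sum_of_not_staysBelow hk

lemma ae_hasSum_indicator_staysBelow (hfin : ∑' k, μ {ω | StaysBelow (X · ω) h k} ≠ ∞)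
    (f : ℕ → Ω → ℝ) :
    ∀ᵐ ω ∂μ, HasSum (fun k => {ω | StaysBelow (X · ω) h k}.indicator (f k) ω)
      (∑ k ∈ range (firstPassage (X · ω) h), f k ω) := by
  classical
  filter_upwards [ae_exists_le_sum hfin] with ω hω
  simpa only [Set.indicator_apply, Set.mem_ofPred_eq] using hasSum_ite_staysBelow hω (f · ω)

variable [IsProbabilityMeasure μ]

lemma tsum_measure_staysBelow_le_of_truncation (hX : ∀ n, Measurable (X n))
    (hind : iIndepFun X μ) (hident : ∀ n, IdentDistrib (X n) (X 0) μ μ)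
    (hint : Integrable (X 0) μ) {c : ℝ} (hc : 0 ≤ c) (hmc : 0 < ∫ ω, min (X 0 ω) c ∂μ)
    (hh : 0 ≤ h) :
    ∑' k, μ {ω | StaysBelow (X · ω) h k} ≤ ENNReal.ofReal ((h + c) / ∫ ω, min (X 0 ω) c ∂μ) := by
  have hmin : Measurable fun t : ℝ => min t c := measurable_id.min measurable_const
  have hid : ∀ k, IdentDistrib (fun ω => min (X k ω) c) (fun ω => min (X 0 ω) c) μ μ :=
    fun k => (hident k).comp hmin
  refine (ENNReal.tsum_le_tsum fun k => measure_mono fun ω hω =>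
    StaysBelow.mono hω (fun i => min_le_left _ c) le_rfl).trans ?_
  exact tsum_measure_staysBelow_le (fun k => (hX k).min measurable_const)
    (hind.comp _ fun _ => hmin) (fun k => (hid k).integrable_iff.2 (hint.inf (integrable_const c)))
    (fun k => (hid k).integral_eq) hmc (fun k ω => min_le_right _ _) hh hc

lemma integral_firstPassage_eq_tsum (hX : ∀ n, Measurable (X n))
    (hfin : ∑' k, μ {ω | StaysBelow (X · ω) h k} ≠ ∞) :
    ∫ ω, (firstPassage (X · ω) h : ℝ) ∂μ = (∑' k, μ {ω | StaysBelow (X · ω) h k}).toReal := by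
  have hA := measurableSet_staysBelow hX h
  obtain ⟨-, heq⟩ := integrable_and_integral_eq_tsum_of_hasSum
    (f := fun k => {ω | StaysBelow (X · ω) h k}.indicator fun _ => 1)
    (fun k => aestronglyMeasurable_const.indicator (hA k))
    (by simpa using ae_hasSum_indicator_staysBelow hfin fun _ _ => 1)
    (by simpa [enorm_indicator_eq_indicator_enorm, hA] using hfin)
  rw [heq, ENNReal.tsum_toReal_eq fun k => measure_ne_top μ _]
  simp [integral_indicator_const _ (hA _), measureReal_def]

lemma le_integral_mul_integral_firstPassage (hX : ∀ n, Measurable (X n))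
    (hind : iIndepFun X μ) (hident : ∀ n, IdentDistrib (X n) (X 0) μ μ)
    (hint : Integrable (X 0) μ) (hfin : ∑' k, μ {ω | StaysBelow (X · ω) h k} ≠ ∞) :
    h ≤ (∫ ω, X 0 ω ∂μ) * ∫ ω, (firstPassage (X · ω) h : ℝ) ∂μ := by
  set A : ℕ → Set Ω := fun k => {ω | StaysBelow (X · ω) h k}
  have hA : ∀ k, MeasurableSet (A k) := measurableSet_staysBelow hX h
  have hXint : ∀ k, Integrable (X k) μ := fun k => (hident k).integrable_iff.2 hint
  have hnorm : ∀ k, ∫⁻ ω, ‖X k ω‖ₑ ∂μ = ∫⁻ ω, ‖X 0 ω‖ₑ ∂μ := fun k =>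
    ((hident k).comp measurable_enorm).lintegral_eq
  obtain ⟨hSint, hSeq⟩ := integrable_and_integral_eq_tsum_of_hasSum
    (fun k => (hXint k).1.indicator (hA k)) (ae_hasSum_indicator_staysBelow hfin X) (by
      simp_rw [lintegral_enorm_indicator_eq_measure_mul (hA _) (hX _)
        (indepFun_indicator_staysBelow hX hind h _), hnorm, ENNReal.tsum_mul_right]
      exact ENNReal.mul_ne_top hfin (hint.2 : ∫⁻ ω, ‖X 0 ω‖ₑ ∂μ < ∞).ne)
  -- Wald's identity `E[S_τ] = E[X 0] * E[τ]`, together with `h ≤ S_τ`.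
  calc h = ∫ _, h ∂μ := by simp
    _ ≤ ∫ ω, ∑ i ∈ range (firstPassage (X · ω) h), X i ω ∂μ :=
      integral_mono_ae (integrable_const h) hSint
        ((ae_exists_le_sum hfin).mono fun ω hω => le_sum_range_firstPassage hω)
    _ = ∑' k, (∫ ω, X 0 ω ∂μ) * μ.real (A k) := by
      rw [hSeq]
      refine tsum_congr fun k => ?_
      rw [integral_indicator_eq_measureReal_mul (hA k) (hXint k).1
        (indepFun_indicator_staysBelow hX hind h k), (hident k).integral_eq, mul_comm]
    _ = (∫ ω, X 0 ω ∂μ) * ∫ ω, (firstPassage (X · ω) h : ℝ) ∂μ := by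
      rw [tsum_mul_left, integral_firstPassage_eq_tsum hX hfin,
        ENNReal.tsum_toReal_eq fun k => measure_ne_top μ _]
      rfl

lemma tsum_measure_staysBelow_ne_top (hX : ∀ n, Measurable (X n)) (hind : iIndepFun X μ)
    (hident : ∀ n, IdentDistrib (X n) (X 0) μ μ) (hint : Integrable (X 0) μ)
    (hm : 0 < ∫ ω, X 0 ω ∂μ) : ∑' k, μ {ω | StaysBelow (X · ω) h k} ≠ ∞ := by
  obtain ⟨c, hc, hmc⟩ := ((eventually_ge_atTop 0).and
    ((tendsto_integral_min_atTop hint).eventually (eventually_gt_nhds hm))).exists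
  refine ne_top_of_le_ne_top ENNReal.ofReal_ne_top
    ((ENNReal.tsum_le_tsum fun k => measure_mono fun ω hω =>
      StaysBelow.mono hω (fun _ => le_rfl) (le_max_left h 0)).trans
    (tsum_measure_staysBelow_le_of_truncation hX hind hident hint hc hmc (le_max_right h 0)))

lemma integral_firstPassage_le (hX : ∀ n, Measurable (X n)) (hind : iIndepFun X μ)
    (hident : ∀ n, IdentDistrib (X n) (X 0) μ μ) (hint : Integrable (X 0) μ) {c : ℝ}
    (hc : 0 ≤ c) (hmc : 0 < ∫ ω, min (X 0 ω) c ∂μ) (hh : 0 ≤ h) :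
    ∫ ω, (firstPassage (X · ω) h : ℝ) ∂μ ≤ (h + c) / ∫ ω, min (X 0 ω) c ∂μ := by
  have hle := tsum_measure_staysBelow_le_of_truncation hX hind hident hint hc hmc hh
  rw [integral_firstPassage_eq_tsum hX (ne_top_of_le_ne_top ENNReal.ofReal_ne_top hle)]
  exact ENNReal.toReal_le_of_le_ofReal (by positivity) hle

end RandomWalk

open RandomWalk in
theorem stmt_9 {Ω : Type*} [MeasurableSpace Ω] (μ : Measure Ω) [IsProbabilityMeasure μ]
    (X : ℕ → Ω → ℝ)
    (hmeas : ∀ n, Measurable (X n))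
    (hindep : ProbabilityTheory.iIndepFun X μ)
    (hident : ∀ n, Measure.map (X n) μ = Measure.map (X 0) μ)
    (hint : Integrable (X 0) μ)
    (m : ℝ) (hm : m = ∫ ω, X 0 ω ∂μ) (hmpos : 0 < m)
    (S : ℕ → Ω → ℝ) (hS : ∀ n ω, S n ω = ∑ k ∈ Finset.range n, X k ω)
    (T : ℝ → Ω → ℕ) (hT : ∀ h ω, T h ω = sInf {n | 1 ≤ n ∧ h ≤ S n ω}) :
    (∀ h : ℝ, ∀ᵐ ω ∂μ, ∃ n, 1 ≤ n ∧ h ≤ S n ω) ∧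
    Tendsto (fun h : ℝ => (∫ ω, (T h ω : ℝ) ∂μ) / h) atTop (nhds (1 / m)) := by
  obtain rfl : S = fun n ω => ∑ k ∈ range n, X k ω := funext₂ hS
  obtain rfl : T = fun h ω => firstPassage (X · ω) h := funext₂ hT
  have hid : ∀ n, IdentDistrib (X n) (X 0) μ μ :=
    fun n => ⟨(hmeas n).aemeasurable, (hmeas 0).aemeasurable, hident n⟩
  have hfin : ∀ h : ℝ, ∑' k, μ {ω | StaysBelow (X · ω) h k} ≠ ∞ :=
    fun h => tsum_measure_staysBelow_ne_top hmeas hindep hid hint (hm ▸ hmpos)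
  refine ⟨fun h => ae_exists_le_sum (hfin h), tendsto_order.2 ⟨fun a ha => ?_, fun b hb => ?_⟩⟩
  · filter_upwards [eventually_gt_atTop 0] with h hh
    have hlow := le_integral_mul_integral_firstPassage hmeas hindep hid hint (hfin h)
    rw [← hm] at hlow
    exact ha.trans_le (by rw [div_le_div_iff₀ hmpos hh]; linarith)
  · have htrunc : Tendsto (fun c => ∫ ω, min (X 0 ω) c ∂μ) atTop (𝓝 m) :=
      hm ▸ tendsto_integral_min_atTop hint
    obtain ⟨c, ⟨hc, hmc⟩, hcb⟩ := (((eventually_ge_atTop 0).and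
      (htrunc.eventually (eventually_gt_nhds hmpos))).and
      ((htrunc.inv₀ hmpos.ne').eventually (eventually_lt_nhds (by rwa [← one_div])))).exists
    filter_upwards [(tendsto_add_div_div_self_atTop c _).eventually (eventually_lt_nhds hcb),
      eventually_gt_atTop 0] with h hlt hh
    refine lt_of_le_of_lt ?_ hlt
    gcongr
    exact integral_firstPassage_le hmeas hindep hid hint hc hmc hh.le
end
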